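/- Let δ = ±1 and let u : ℝ × ℝ → ℝ be a positive function, twice continuously differentiable in x and once in t, satisfying the semilinear heat equation u_t = u_xx + δ·u·ln u. Then for every a ∈ ℝ the function v(x,t) = u(x − 2a·e^{δt}, t)·exp(−δ·a·e^{δt}·x + δ·a²·e^{2δt}) is positive and again satisfies v_t = v_xx + δ·v·ln v. That is, the semilinear heat equation admits the one-parameter symmetry group generated by X₃ = 2e^{δt}∂/∂x − δe^{δt}xu∂/∂u. -/

import Mathlib

/-!
Write `T F (x, t) = F (ξ, t) · exp (-k x + δ a² e^{2δt})` with `ξ = x - 2a e^{δt}` and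
`k = δ a e^{δt}`. Because the shift depends only on `t` and the exponent of the gauge factor is
affine in `x`, partial derivatives of `T F` are again transforms:
`(T F)_x = T F_x - k T F`, `(T F)_xx = T F_xx - 2k T F_x + k² T F` and
`(T F)_t = T F_t - 2k T F_x + δ² a (2a e^{2δt} - e^{δt} x) T F`,
while `ln (T F) = ln F(ξ, t) - k x + δ a² e^{2δt}`. Substituting, the equation for `T F` at
`(x, t)` is the equation for `F` at `(ξ, t)` times the gauge factor.
-/

open Real

section PartialDerivatives

variable {F : ℝ × ℝ → ℝ} {x t : ℝ}

theorem DifferentiableAt.hasDerivAt_comp_mk_const (hF : DifferentiableAt ℝ F (x, t)) :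
    HasDerivAt (fun y => F (y, t)) (fderiv ℝ F (x, t) (1, 0)) x :=
  hF.hasFDerivAt.comp_hasDerivAt x ((hasDerivAt_id x).prodMk (hasDerivAt_const x t))

theorem DifferentiableAt.hasDerivAt_comp_graph {ξ : ℝ → ℝ} {ξ' : ℝ}
    (hF : DifferentiableAt ℝ F (ξ t, t)) (hξ : HasDerivAt ξ ξ' t) :
    HasDerivAt (fun s => F (ξ s, s))
      (ξ' * fderiv ℝ F (ξ t, t) (1, 0) + fderiv ℝ F (ξ t, t) (0, 1)) t := by
  have hγ : HasDerivAt (fun s => (ξ s, s)) ((ξ', 1) : ℝ × ℝ) t :=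
    hξ.prodMk (hasDerivAt_id' t)
  have hsplit : ((ξ', 1) : ℝ × ℝ) = ξ' • (1, 0) + (0, 1) := by ext <;> simp
  refine (hF.hasFDerivAt.comp_hasDerivAt (f := fun s => (ξ s, s)) t hγ).congr_deriv ?_
  rw [hsplit, map_add, map_smul, smul_eq_mul]

theorem DifferentiableAt.fderiv_apply_one_zero (hF : DifferentiableAt ℝ F (x, t)) :
    fderiv ℝ F (x, t) (1, 0) = deriv (fun y => F (y, t)) x :=
  hF.hasDerivAt_comp_mk_const.deriv.symm

theorem DifferentiableAt.fderiv_apply_zero_one (hF : DifferentiableAt ℝ F (x, t)) :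
    fderiv ℝ F (x, t) (0, 1) = deriv (fun s => F (x, s)) t := by
  simpa using (hF.hasDerivAt_comp_graph (ξ := fun _ => x) (hasDerivAt_const t x)).deriv.symm

end PartialDerivatives

/-- The image of `F` under the group element `exp (a X₃)`. -/
noncomputable def heatSymmetryX3 (del a : ℝ) (F : ℝ × ℝ → ℝ) (p : ℝ × ℝ) : ℝ :=
  F (p.1 - 2 * a * exp (del * p.2), p.2)
    * exp (-(del * a * exp (del * p.2) * p.1) + del * a ^ 2 * exp (2 * del * p.2))

section HeatSymmetryX3

variable {del a x t : ℝ} {G : ℝ × ℝ → ℝ}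

theorem differentiable_heatSymmetryX3 (hG : Differentiable ℝ G) :
    Differentiable ℝ (heatSymmetryX3 del a G) := by
  unfold heatSymmetryX3; fun_prop

theorem hasDerivAt_heatSymmetryX3_left (hG : Differentiable ℝ G) :
    HasDerivAt (fun y => heatSymmetryX3 del a G (y, t))
      (heatSymmetryX3 del a (fun q => fderiv ℝ G q (1, 0)) (x, t)
        - del * a * exp (del * t) * heatSymmetryX3 del a G (x, t)) x := by
  have hshift := (hG (x - 2 * a * exp (del * t), t)).hasDerivAt_comp_mk_const.comp x
    ((hasDerivAt_id x).sub_const (2 * a * exp (del * t)))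
  have hgauge := (((hasDerivAt_id x).const_mul (del * a * exp (del * t))).neg.add_const
    (del * a ^ 2 * exp (2 * del * t))).exp
  refine (hshift.mul hgauge).congr_deriv ?_
  simp only [heatSymmetryX3, id, Pi.neg_apply, Function.comp_apply]
  ring

theorem hasDerivAt_heatSymmetryX3_right (hG : Differentiable ℝ G) :
    HasDerivAt (fun s => heatSymmetryX3 del a G (x, s))
      (heatSymmetryX3 del a (fun q => fderiv ℝ G q (0, 1)) (x, t)
        - 2 * del * a * exp (del * t) * heatSymmetryX3 del a (fun q => fderiv ℝ G q (1, 0)) (x, t)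
        + del ^ 2 * a * (2 * a * exp (2 * del * t) - exp (del * t) * x)
          * heatSymmetryX3 del a G (x, t)) t := by
  have he1 := ((hasDerivAt_id t).const_mul del).exp
  have he2 := ((hasDerivAt_id t).const_mul (2 * del)).exp
  have hshift := (hG (x - 2 * a * exp (del * t), t)).hasDerivAt_comp_graph
    ((he1.const_mul (2 * a)).const_sub x)
  have hgauge :=
    (((he1.const_mul (del * a)).mul_const x).neg.add (he2.const_mul (del * a ^ 2))).exp
  refine (hshift.mul hgauge).congr_deriv ?_
  simp only [heatSymmetryX3, id, Pi.neg_apply, Pi.add_apply]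
  ring

theorem fderiv_heatSymmetryX3_apply_one_zero (hG : Differentiable ℝ G) (p : ℝ × ℝ) :
    fderiv ℝ (heatSymmetryX3 del a G) p (1, 0)
      = heatSymmetryX3 del a (fun q => fderiv ℝ G q (1, 0)) p
        - del * a * exp (del * p.2) * heatSymmetryX3 del a G p := by
  rw [(differentiable_heatSymmetryX3 hG p).fderiv_apply_one_zero]
  exact (hasDerivAt_heatSymmetryX3_left hG).deriv

theorem fderiv_heatSymmetryX3_apply_zero_one (hG : Differentiable ℝ G) :
    fderiv ℝ (heatSymmetryX3 del a G) (x, t) (0, 1)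
      = heatSymmetryX3 del a (fun q => fderiv ℝ G q (0, 1)) (x, t)
        - 2 * del * a * exp (del * t) * heatSymmetryX3 del a (fun q => fderiv ℝ G q (1, 0)) (x, t)
        + del ^ 2 * a * (2 * a * exp (2 * del * t) - exp (del * t) * x)
          * heatSymmetryX3 del a G (x, t) := by
  rw [(differentiable_heatSymmetryX3 hG (x, t)).fderiv_apply_zero_one]
  exact (hasDerivAt_heatSymmetryX3_right hG).deriv

theorem fderiv_fderiv_heatSymmetryX3_apply_one_zero (hG : ContDiff ℝ 2 G) :
    fderiv ℝ (fun p => fderiv ℝ (heatSymmetryX3 del a G) p (1, 0)) (x, t) (1, 0)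
      = heatSymmetryX3 del a (fun q => fderiv ℝ (fun p => fderiv ℝ G p (1, 0)) q (1, 0)) (x, t)
        - 2 * del * a * exp (del * t) * heatSymmetryX3 del a (fun q => fderiv ℝ G q (1, 0)) (x, t)
        + (del * a * exp (del * t)) ^ 2 * heatSymmetryX3 del a G (x, t) := by
  have hG₁ : Differentiable ℝ G := hG.differentiable (by norm_num)
  have hGx : Differentiable ℝ (fun q => fderiv ℝ G q (1, 0)) := fun q =>
    (((hG.fderiv_right (m := 1) le_rfl).differentiable one_ne_zero) q).clm_apply
      (differentiableAt_const _)
  simp_rw [fderiv_heatSymmetryX3_apply_one_zero hG₁]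
  have hd : DifferentiableAt ℝ (fun p : ℝ × ℝ =>
      heatSymmetryX3 del a (fun q => fderiv ℝ G q (1, 0)) p
        - del * a * exp (del * p.2) * heatSymmetryX3 del a G p) (x, t) :=
    ((differentiable_heatSymmetryX3 hGx).sub
      ((by fun_prop : Differentiable ℝ fun p : ℝ × ℝ => del * a * exp (del * p.2)).mul
        (differentiable_heatSymmetryX3 hG₁))) _
  rw [hd.fderiv_apply_one_zero]
  have hx := hasDerivAt_heatSymmetryX3_left (del := del) (a := a) (x := x) (t := t) hGx
  have h₀ := hasDerivAt_heatSymmetryX3_left (del := del) (a := a) (x := x) (t := t) hG₁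
  exact ((hx.sub (h₀.const_mul (del * a * exp (del * t)))).congr_deriv (by ring)).deriv

end HeatSymmetryX3

def SolvesLogHeat (del : ℝ) (F : ℝ × ℝ → ℝ) : Prop :=
  ∀ q, fderiv ℝ F q (0, 1)
    = fderiv ℝ (fun p => fderiv ℝ F p (1, 0)) q (1, 0) + del * F q * log (F q)

theorem solvesLogHeat_heatSymmetryX3 {del : ℝ} {F : ℝ × ℝ → ℝ} (h : SolvesLogHeat del F)
    (hF : ContDiff ℝ 2 F) (hpos : ∀ q, 0 < F q) (a : ℝ) :
    SolvesLogHeat del (heatSymmetryX3 del a F) := by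
  rintro ⟨x, t⟩
  rw [fderiv_heatSymmetryX3_apply_zero_one (hF.differentiable (by norm_num)),
    fderiv_fderiv_heatSymmetryX3_apply_one_zero hF, funext h]
  have hexp : exp (2 * del * t) = exp (del * t) ^ 2 := by rw [← exp_nat_mul]; ring_nf
  simp only [heatSymmetryX3]
  rw [log_mul (hpos _).ne' (exp_ne_zero _), log_exp, hexp]
  ring

theorem semilinear_heat_X3_symmetry
    (del : ℝ)
    (u : ℝ → ℝ → ℝ) (hu : ContDiff ℝ 2 (fun p : ℝ × ℝ => u p.1 p.2))
    (hpos : ∀ x t, 0 < u x t)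
    (hheat : ∀ x t : ℝ,
      fderiv ℝ (fun p : ℝ × ℝ => u p.1 p.2) (x, t) (0, 1)
        = fderiv ℝ (fun p : ℝ × ℝ =>
            fderiv ℝ (fun q : ℝ × ℝ => u q.1 q.2) p (1, 0)) (x, t) (1, 0)
          + del * u x t * Real.log (u x t))
    (a : ℝ)
    (v : ℝ → ℝ → ℝ)
    (hv : ∀ x t, v x t = u (x - 2 * a * Real.exp (del * t)) t
        * Real.exp (-(del * a * Real.exp (del * t) * x)
            + del * a ^ 2 * Real.exp (2 * del * t))) :
    ∀ x t : ℝ,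
      0 < v x t ∧
      fderiv ℝ (fun p : ℝ × ℝ => v p.1 p.2) (x, t) (0, 1)
        = fderiv ℝ (fun p : ℝ × ℝ =>
            fderiv ℝ (fun q : ℝ × ℝ => v q.1 q.2) p (1, 0)) (x, t) (1, 0)
          + del * v x t * Real.log (v x t) := by
  have hV : (fun p : ℝ × ℝ => v p.1 p.2) = heatSymmetryX3 del a (fun p => u p.1 p.2) :=
    funext fun p => hv p.1 p.2
  have hsol : SolvesLogHeat del (heatSymmetryX3 del a (fun p => u p.1 p.2)) :=
    solvesLogHeat_heatSymmetryX3 (fun q => hheat q.1 q.2) hu (fun q => hpos q.1 q.2) a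
  rw [← hV] at hsol
  intro x t
  exact ⟨hv x t ▸ mul_pos (hpos _ _) (exp_pos _), hsol (x, t)⟩
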